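/- Rank of the rest-state Salmon D2Q9 Jacobian: let h̄ > 0, e > 0 and 0 < g < 3e²/(5h̄), and let M be the 9×9 matrix with M_{0j} = 1 − 5gh̄/(3e²) for all j, M_{ij} = gh̄/(3e²) + (ξ_i·ξ_j)/(3e²) for 1 ≤ i ≤ 4, and M_{ij} = gh̄/(12e²) + (ξ_i·ξ_j)/(12e²) for 5 ≤ i ≤ 8. Then rank(M) = 3 and rank(M − I₉) = 6. -/
import Mathlib

open scoped Matrix

/-- Dot product on `ℝ × ℝ`. -/
def pdot (a b : ℝ × ℝ) : ℝ := a.1 * b.1 + a.2 * b.2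

/-- The D2Q9 lattice velocities with lattice speed `e`. -/
def xi9 (e : ℝ) : Fin 9 → ℝ × ℝ :=
  ![(0, 0), (e, 0), (0, e), (-e, 0), (0, -e), (e, e), (-e, e), (-e, -e), (e, -e)]

/-- The Jacobian of the Salmon D2Q9 equilibrium distribution at the rest state `(h̄, 0)`. -/
noncomputable def M9 (g e hb : ℝ) : Matrix (Fin 9) (Fin 9) ℝ :=
  Matrix.of fun i j =>
    if i = 0 then 1 - 5 * g * hb / (3 * e ^ 2)
    else if (i : ℕ) ≤ 4 then
      g * hb / (3 * e ^ 2) + pdot (xi9 e i) (xi9 e j) / (3 * e ^ 2)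
    else
      g * hb / (12 * e ^ 2) + pdot (xi9 e i) (xi9 e j) / (12 * e ^ 2)

/-- Left factor of the rank factorization `M = A * B`. -/
noncomputable def Am (a : ℝ) : Matrix (Fin 9) (Fin 3) ℝ :=
  !![1 - 5*a, 0, 0;
     a, 1/3, 0;
     a, 0, 1/3;
     a, -(1/3), 0;
     a, 0, -(1/3);
     a/4, 1/12, 1/12;
     a/4, -(1/12), 1/12;
     a/4, -(1/12), -(1/12);
     a/4, 1/12, -(1/12)]

/-- Right factor of the rank factorization `M = A * B` (moment matrix). -/
def Bm : Matrix (Fin 3) (Fin 9) ℝ :=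
  !![1, 1, 1, 1, 1, 1, 1, 1, 1;
     0, 1, 0, -1, 0, 1, -1, -1, 1;
     0, 0, 1, 0, -1, 1, 1, -1, -1]

/-- Orthogonal basis of `ker Bm` assembled as columns. -/
def Qm : Matrix (Fin 9) (Fin 6) ℝ :=
  !![0, 0, 0, 8, 0, 0;
     1, 0, -1, -1, 2, 0;
     -1, 0, -1, -1, 0, 2;
     1, 0, -1, -1, -2, 0;
     -1, 0, -1, -1, 0, -2;
     0, 1, 1, -1, -1, -1;
     0, -1, 1, -1, 1, -1;
     0, 1, 1, -1, 1, 1;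
     0, -1, 1, -1, -1, 1]

set_option maxHeartbeats 3000000 in
lemma M9_eq_Am_mul_Bm (g e hb : ℝ) (he' : e ≠ 0) :
    M9 g e hb = Am (g * hb / (3 * e ^ 2)) * Bm := by
  ext i j
  fin_cases i <;> fin_cases j <;>
    simp only [M9, Am, Bm, pdot, xi9, Matrix.mul_apply, Fin.sum_univ_succ,
      Fin.sum_univ_zero, Matrix.of_apply, Matrix.cons_val', Matrix.cons_val_zero,
      Matrix.cons_val_one, Matrix.head_cons, Matrix.cons_val_fin_one, Matrix.empty_val',
      Matrix.head_fin_const, Matrix.cons_val_succ, Fin.isValue, if_true, if_false] <;>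
    norm_num [Fin.ext_iff] <;> field_simp <;> (try ring) <;> (try tauto)

lemma Bm_mul_Am (a : ℝ) : Bm * Am a = 1 := by
  ext i j
  fin_cases i <;> fin_cases j <;>
    simp [Am, Bm, Matrix.mul_apply, Fin.sum_univ_succ, Matrix.one_apply] <;> ring

lemma Bm_mul_Qm : Bm * Qm = 0 := by
  ext i j
  fin_cases i <;> fin_cases j <;>
    norm_num [Bm, Qm, Matrix.mul_apply, Fin.sum_univ_succ]

lemma Qm_gram : Qmᵀ * Qm = -(Matrix.diagonal ![(-4 : ℝ), -4, -8, -72, -12, -12]) := by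
  ext i j
  fin_cases i <;> fin_cases j <;>
    norm_num [Qm, Matrix.mul_apply, Fin.sum_univ_succ, Matrix.diagonal, Fin.ext_iff]

set_option maxHeartbeats 1000000 in
theorem d2q9_salmon_rank (hb e g : ℝ) (hhb : 0 < hb) (he : 0 < e)
    (hg0 : 0 < g) (hg : g < 3 * e ^ 2 / (5 * hb)) :
    (M9 g e hb).rank = 3 ∧ (M9 g e hb - 1).rank = 6 := by
  have he' : e ≠ 0 := ne_of_gt he
  set a : ℝ := g * hb / (3 * e ^ 2) with ha
  set N : Matrix (Fin 9) (Fin 9) ℝ := M9 g e hb with hN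
  have hAB : N = Am a * Bm := M9_eq_Am_mul_Bm g e hb he'
  have hBA : Bm * Am a = 1 := Bm_mul_Am a
  have hMA : N * Am a = Am a := by
    rw [hAB, Matrix.mul_assoc, hBA, Matrix.mul_one]
  -- rank N ≤ 3
  have h1 : N.rank ≤ 3 := by
    calc N.rank = (Am a * Bm).rank := by rw [hAB]
      _ ≤ (Am a).rank := Matrix.rank_mul_le_left _ _
      _ ≤ Fintype.card (Fin 3) := Matrix.rank_le_card_width _
      _ = 3 := Fintype.card_fin 3
  -- rank N ≥ 3
  have hBNA : Bm * (N * Am a) = 1 := by rw [hMA, hBA]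
  have h2 : 3 ≤ N.rank := by
    calc (3 : ℕ) = (1 : Matrix (Fin 3) (Fin 3) ℝ).rank := by
          rw [Matrix.rank_one, Fintype.card_fin]
      _ = (Bm * (N * Am a)).rank := by rw [hBNA]
      _ ≤ (N * Am a).rank := Matrix.rank_mul_le_right _ _
      _ ≤ N.rank := Matrix.rank_mul_le_left _ _
  -- rank of Am is 3
  have hrA : (Am a).rank = 3 := by
    refine le_antisymm ((Matrix.rank_le_card_width _).trans (Fintype.card_fin 3).le) ?_
    calc (3 : ℕ) = (1 : Matrix (Fin 3) (Fin 3) ℝ).rank := by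
          rw [Matrix.rank_one, Fintype.card_fin]
      _ = (Bm * Am a).rank := by rw [hBA]
      _ ≤ (Am a).rank := Matrix.rank_mul_le_right _ _
  -- rank (N - 1) ≤ 6
  have hzero : (N - 1) * Am a = 0 := by
    rw [Matrix.sub_mul, hMA, Matrix.one_mul, sub_self]
  have h3 : (N - 1).rank ≤ 6 := by
    have h9 := Matrix.rank_add_rank_le_card_of_mul_eq_zero hzero
    rw [hrA, Fintype.card_fin] at h9
    omega
  -- rank (N - 1) ≥ 6
  have hMQ : (N - 1) * Qm = -Qm := by
    rw [Matrix.sub_mul, hAB, Matrix.mul_assoc, Bm_mul_Qm, Matrix.mul_zero, Matrix.one_mul,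
      zero_sub]
  have hS : Qmᵀ * ((N - 1) * Qm) = Matrix.diagonal ![(-4 : ℝ), -4, -8, -72, -12, -12] := by
    rw [hMQ, Matrix.mul_neg, Qm_gram, neg_neg]
  have hunit : IsUnit (Matrix.diagonal ![(-4 : ℝ), -4, -8, -72, -12, -12]) := by
    rw [Matrix.isUnit_iff_isUnit_det, Matrix.det_diagonal, isUnit_iff_ne_zero]
    norm_num [Fin.prod_univ_succ]
  have h4 : 6 ≤ (N - 1).rank := by
    calc (6 : ℕ) = Fintype.card (Fin 6) := (Fintype.card_fin 6).symm
      _ = (Matrix.diagonal ![(-4 : ℝ), -4, -8, -72, -12, -12]).rank :=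
        (Matrix.rank_of_isUnit _ hunit).symm
      _ = (Qmᵀ * ((N - 1) * Qm)).rank := by rw [hS]
      _ ≤ ((N - 1) * Qm).rank := Matrix.rank_mul_le_right _ _
      _ ≤ (N - 1).rank := Matrix.rank_mul_le_left _ _
  exact ⟨le_antisymm h1 h2, le_antisymm h3 h4⟩
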